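/- Let P be a full-dimensional centered polytope in ℝ^d and F a face of P. Then F^D is a face of P*. Moreover, if F is nontrivial, then N(F;P) = {λx : λ > 0, x ∈ relint(F^D)}, and consequently the topological closure of N(F;P) equals {λx : λ ≥ 0, x ∈ F^D}. -/
import Mathlib


open Pointwise RealInnerProductSpace

noncomputable section

abbrev E (d : ℕ) : Type := EuclideanSpace ℝ (Fin d)

def IsPolytope {d : ℕ} (P : Set (E d)) : Prop :=
  ∃ V : Finset (E d), V.Nonempty ∧ P = convexHull ℝ (V : Set (E d))

def maximizers {d : ℕ} (P : Set (E d)) (c : E d) : Set (E d) :=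
  {x ∈ P | ∀ y ∈ P, ⟪y, c⟫ ≤ ⟪x, c⟫}

def IsFace {d : ℕ} (P F : Set (E d)) : Prop :=
  F = ∅ ∨ F = P ∨ ∃ c : E d, c ≠ 0 ∧ F = maximizers P c

def IsNontrivialFace {d : ℕ} (P F : Set (E d)) : Prop :=
  IsFace P F ∧ F ≠ ∅ ∧ F ≠ P

def polarDual {d : ℕ} (P : Set (E d)) : Set (E d) :=
  {x | ∀ y ∈ P, ⟪x, y⟫ ≤ 1}

def dualFace {d : ℕ} (P F : Set (E d)) : Set (E d) :=
  {x ∈ polarDual P | ∀ f ∈ F, ⟪x, f⟫ = 1}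

def normalCone {d : ℕ} (P F : Set (E d)) : Set (E d) :=
  {c | maximizers P c = F}

def IsPerfectlyCentered {d : ℕ} (P : Set (E d)) : Prop :=
  ∀ F : Set (E d), IsFace P F → F.Nonempty →
    (intrinsicInterior ℝ F ∩ normalCone P F).Nonempty

def dimSet {d : ℕ} (F : Set (E d)) : ℕ :=
  Module.finrank ℝ (affineSpan ℝ F).direction

def fVec {d : ℕ} (P : Set (E d)) (k : ℕ) : ℕ :=
  {F : Set (E d) | IsFace P F ∧ F.Nonempty ∧ dimSet F = k}.ncard


namespace DFaux

open Topology

variable {d : ℕ}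

lemma isLinearMap_inner_right (c : E d) : IsLinearMap ℝ (fun x : E d => ⟪x, c⟫) :=
  ⟨fun a b => inner_add_left a b c, fun t a => real_inner_smul_left a c t⟩

lemma inner_le_sup' (V : Finset (E d)) (hV : V.Nonempty) (c : E d) {x : E d}
    (hx : x ∈ convexHull ℝ (V : Set (E d))) :
    ⟪x, c⟫ ≤ V.sup' hV (fun v => ⟪v, c⟫) := by
  have h : convexHull ℝ (V : Set (E d)) ⊆ {y | ⟪y, c⟫ ≤ V.sup' hV fun v => ⟪v, c⟫} :=
    convexHull_min (fun v hv => Finset.le_sup' (fun v => ⟪v, c⟫) (Finset.mem_coe.mp hv))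
      (convex_halfSpace_le (isLinearMap_inner_right c) _)
  exact h hx

lemma maximizers_convexHull (V : Finset (E d)) (hV : V.Nonempty) (c : E d) :
    maximizers (convexHull ℝ (V : Set (E d))) c
      = convexHull ℝ ((V.filter (fun v => ⟪v, c⟫ = V.sup' hV fun v => ⟪v, c⟫)
          : Finset (E d)) : Set (E d)) := by
  set m := V.sup' hV fun v => ⟪v, c⟫ with hm
  set W := V.filter (fun v => ⟪v, c⟫ = m) with hWdef
  ext x
  constructor
  · rintro ⟨hxP, hmax⟩
    have hxm : ⟪x, c⟫ = m := by
      obtain ⟨v, hvV, hvm⟩ := Finset.exists_mem_eq_sup' hV (fun v => ⟪v, c⟫)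
      have h1 : ⟪x, c⟫ ≤ m := inner_le_sup' V hV c hxP
      have h2 : ⟪v, c⟫ ≤ ⟪x, c⟫ :=
        hmax v (subset_convexHull ℝ _ (Finset.mem_coe.mpr hvV))
      have h3 : m = ⟪v, c⟫ := hm.trans hvm
      linarith
    rw [Finset.convexHull_eq] at hxP ⊢
    obtain ⟨w, hw0, hw1, hwx⟩ := hxP
    rw [Finset.centerMass_eq_of_sum_1 _ _ hw1] at hwx
    have hinner : ∑ v ∈ V, w v * ⟪v, c⟫ = m := by
      have := congrArg (fun y : E d => ⟪y, c⟫) hwx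
      rw [sum_inner] at this
      simp only [real_inner_smul_left, id_eq] at this
      rw [this, hxm]
    have hzero : ∀ v ∈ V, w v * (m - ⟪v, c⟫) = 0 := by
      rw [← Finset.sum_eq_zero_iff_of_nonneg]
      · have : ∑ v ∈ V, w v * (m - ⟪v, c⟫) = m * (∑ v ∈ V, w v) - ∑ v ∈ V, w v * ⟪v, c⟫ := by
          rw [Finset.mul_sum, ← Finset.sum_sub_distrib]
          exact Finset.sum_congr rfl fun v _ => by ring
        rw [this, hw1, hinner]; ring
      · intro v hv
        have h1 : ⟪v, c⟫ ≤ m := Finset.le_sup' (fun v => ⟪v, c⟫) hv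
        have h2 := hw0 v hv
        nlinarith
    have hvanish : ∀ v ∈ V, v ∉ W → w v = 0 := by
      intro v hv hvW
      have h1 : ⟪v, c⟫ ≠ m := by
        intro h; exact hvW (Finset.mem_filter.mpr ⟨hv, h⟩)
      have h2 : ⟪v, c⟫ ≤ m := Finset.le_sup' (fun v => ⟪v, c⟫) hv
      have := hzero v hv
      rcases mul_eq_zero.mp this with h | h
      · exact h
      · exact absurd (by linarith : ⟪v, c⟫ = m) h1
    refine ⟨w, fun y hy => hw0 y (Finset.filter_subset _ _ hy), ?_, ?_⟩
    · rw [← hw1]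
      exact (Finset.sum_subset (Finset.filter_subset _ _)
        (fun v hv hvW => hvanish v hv hvW)).symm ▸ rfl
    · have hsum : ∑ v ∈ W, w v = 1 := by
        rw [← hw1]
        exact Finset.sum_subset (Finset.filter_subset _ _) (fun v hv hvW => hvanish v hv hvW)
      rw [Finset.centerMass_eq_of_sum_1 _ _ hsum, ← hwx]
      exact Finset.sum_subset (Finset.filter_subset _ _)
        (fun v hv hvW => by rw [hvanish v hv hvW, zero_smul])
  · intro hx
    have hsubP : x ∈ convexHull ℝ (V : Set (E d)) :=
      convexHull_mono (by exact_mod_cast Finset.filter_subset _ _) hx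
    have hxm : ⟪x, c⟫ = m := by
      have h : convexHull ℝ (W : Set (E d)) ⊆ {y | ⟪y, c⟫ = m} :=
        convexHull_min (fun v hv => (Finset.mem_filter.mp (Finset.mem_coe.mp hv)).2)
          (convex_hyperplane (isLinearMap_inner_right c) _)
      exact h hx
    exact ⟨hsubP, fun y hy => by rw [hxm]; exact inner_le_sup' V hV c hy⟩

lemma polarDual_convexHull (V : Finset (E d)) :
    polarDual (convexHull ℝ (V : Set (E d))) = {x | ∀ v ∈ V, ⟪x, v⟫ ≤ 1} := by
  ext x
  constructor
  · intro hx v hv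
    exact hx v (subset_convexHull ℝ _ (Finset.mem_coe.mpr hv))
  · intro hx y hy
    rw [real_inner_comm]
    have h : convexHull ℝ (V : Set (E d)) ⊆ {z | ⟪z, x⟫ ≤ 1} :=
      convexHull_min (fun v hv => by
        show ⟪v, x⟫ ≤ 1
        rw [real_inner_comm]; exact hx v (Finset.mem_coe.mp hv))
        (convex_halfSpace_le (isLinearMap_inner_right x) _)
    exact h hy

lemma sup'_pos (V : Finset (E d)) (hV : V.Nonempty)
    (hc : 0 ∈ interior (convexHull ℝ (V : Set (E d)))) {c : E d} (hc0 : c ≠ 0) :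
    0 < V.sup' hV fun v => ⟪v, c⟫ := by
  obtain ⟨ε, hε, hball⟩ := Metric.mem_nhds_iff.mp (mem_interior_iff_mem_nhds.mp hc)
  have hcnorm : (0:ℝ) < ‖c‖ := norm_pos_iff.mpr hc0
  set y : E d := (ε / (2 * ‖c‖)) • c with hy
  have hymem : y ∈ convexHull ℝ (V : Set (E d)) := by
    apply hball
    rw [Metric.mem_ball, dist_zero_right, hy, norm_smul]
    rw [Real.norm_eq_abs, abs_of_pos (by positivity)]
    rw [div_mul_eq_mul_div, mul_comm]
    rw [mul_div_assoc]
    calc ‖c‖ * (ε / (2 * ‖c‖)) = ε / 2 := by field_simp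
    _ < ε := by linarith
  have hyc : ⟪y, c⟫ = (ε / (2 * ‖c‖)) * ‖c‖ ^ 2 := by
    rw [hy, real_inner_smul_left, real_inner_self_eq_norm_sq]
  have : (0:ℝ) < ⟪y, c⟫ := by rw [hyc]; positivity
  calc (0:ℝ) < ⟪y, c⟫ := this
  _ ≤ _ := inner_le_sup' V hV c hymem

def innerOne (w : E d) : AffineSubspace ℝ (E d) where
  carrier := {x | ⟪x, w⟫ = 1}
  smul_vsub_vadd_mem' c p1 p2 p3 h1 h2 h3 := by
    simp only [Set.mem_setOf_eq, vsub_eq_sub, vadd_eq_add] at *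
    rw [inner_add_left, real_inner_smul_left, inner_sub_left, h1, h2, h3]; ring

lemma all_eq_one {s : Finset (E d)} {f : E d → ℝ} (hle : ∀ i ∈ s, f i ≤ 1)
    (hsum : ∑ i ∈ s, f i = s.card) : ∀ i ∈ s, f i = 1 := by
  by_contra h
  push_neg at h
  obtain ⟨i, hi, hne⟩ := h
  have hlt : f i < 1 := lt_of_le_of_ne (hle i hi) hne
  have : ∑ j ∈ s, f j < ∑ j ∈ s, (1:ℝ) :=
    Finset.sum_lt_sum hle ⟨i, hi, hlt⟩
  rw [hsum, Finset.sum_const, nsmul_eq_mul, mul_one] at this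
  exact lt_irrefl _ this


def Dset (V W : Finset (E d)) : Set (E d) :=
  {x | (∀ v ∈ V, ⟪x, v⟫ ≤ 1) ∧ ∀ w ∈ W, ⟪x, w⟫ = 1}

def Rset (V W : Finset (E d)) : Set (E d) :=
  {x | (∀ w ∈ W, ⟪x, w⟫ = 1) ∧ ∀ v ∈ V, v ∉ W → ⟪x, v⟫ < 1}

lemma Rset_subset_Dset {V W : Finset (E d)} (hWV : W ⊆ V) : Rset V W ⊆ Dset V W := by
  rintro x ⟨h1, h2⟩
  refine ⟨fun v hv => ?_, h1⟩
  by_cases hvW : v ∈ W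
  · exact le_of_eq (h1 v hvW)
  · exact le_of_lt (h2 v hv hvW)

lemma span_inner_eq_one {V W : Finset (E d)} {x : E d}
    (hx : x ∈ affineSpan ℝ (Dset V W)) : ∀ w ∈ W, ⟪x, w⟫ = 1 := by
  intro w hw
  have h : affineSpan ℝ (Dset V W) ≤ innerOne w :=
    affineSpan_le.mpr (fun y hy => hy.2 w hw)
  exact h hx

lemma intrinsicInterior_Dset_eq_Rset {V W : Finset (E d)} (hWV : W ⊆ V)
    {x₀ : E d} (hx₀ : x₀ ∈ Rset V W) :
    intrinsicInterior ℝ (Dset V W) = Rset V W := by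
  classical
  apply Set.Subset.antisymm
  · -- intrinsic interior ⊆ Rset
    intro x hx
    have hxD : x ∈ Dset V W := intrinsicInterior_subset hx
    refine ⟨hxD.2, fun v hv hvW => ?_⟩
    by_contra hlt
    have h1 : ⟪x, v⟫ = 1 := le_antisymm (hxD.1 v hv) (not_lt.mp hlt)
    rw [mem_intrinsicInterior] at hx
    obtain ⟨y, hyint, hyx⟩ := hx
    have hx₀span : x₀ ∈ affineSpan ℝ (Dset V W) :=
      subset_affineSpan ℝ _ (Rset_subset_Dset hWV hx₀)
    have hxspan : (x : E d) ∈ affineSpan ℝ (Dset V W) := hyx ▸ y.2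
    have hmem : ∀ t : ℝ, t • (x - x₀) + x ∈ affineSpan ℝ (Dset V W) := by
      intro t
      have := (affineSpan ℝ (Dset V W)).smul_vsub_vadd_mem t hxspan hx₀span hxspan
      simpa [vsub_eq_sub, vadd_eq_add] using this
    set γ : ℝ → affineSpan ℝ (Dset V W) := fun t => ⟨t • (x - x₀) + x, hmem t⟩ with hγ
    have hcont : Continuous γ := by
      apply Continuous.subtype_mk
      exact (continuous_id.smul continuous_const).add continuous_const
    have hγ0 : γ 0 = y := by
      apply Subtype.ext
      show (0:ℝ) • (x - x₀) + x = ↑y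
      rw [zero_smul, zero_add, hyx]
    have hopen : IsOpen (γ ⁻¹' interior (Subtype.val ⁻¹' Dset V W)) :=
      isOpen_interior.preimage hcont
    have h0mem : (0:ℝ) ∈ γ ⁻¹' interior (Subtype.val ⁻¹' Dset V W) := by
      rw [Set.mem_preimage, hγ0]; exact hyint
    obtain ⟨ε, hε, hball⟩ := Metric.isOpen_iff.mp hopen 0 h0mem
    have htmem : (ε/2 : ℝ) ∈ γ ⁻¹' interior (Subtype.val ⁻¹' Dset V W) := by
      apply hball
      rw [Metric.mem_ball, Real.dist_eq, sub_zero, abs_of_pos (by positivity)]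
      linarith
    have h5 : γ (ε/2) ∈ Subtype.val ⁻¹' Dset V W := interior_subset htmem
    have hDmem : (ε/2) • (x - x₀) + x ∈ Dset V W := h5
    have hle : ⟪(ε/2) • (x - x₀) + x, v⟫ ≤ 1 := hDmem.1 v hv
    have hx₀v : ⟪x₀, v⟫ < 1 := hx₀.2 v hv hvW
    rw [inner_add_left, real_inner_smul_left, inner_sub_left, h1] at hle
    nlinarith
  · -- Rset ⊆ intrinsic interior
    intro x hx
    rw [mem_intrinsicInterior]
    have hxD : x ∈ Dset V W := Rset_subset_Dset hWV hx
    refine ⟨⟨x, subset_affineSpan ℝ _ hxD⟩, ?_, rfl⟩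
    set G : Set (E d) := ⋂ v ∈ (V \ W), {y : E d | ⟪y, v⟫ < 1} with hG
    have hGopen : IsOpen G :=
      isOpen_biInter_finset (fun v _ =>
        isOpen_lt (Continuous.inner continuous_id continuous_const) continuous_const)
    have hsub : (Subtype.val ⁻¹' G : Set (affineSpan ℝ (Dset V W)))
        ⊆ Subtype.val ⁻¹' Dset V W := by
      rintro ⟨y, hyA⟩ hyG
      have h1 : ∀ w ∈ W, ⟪y, w⟫ = 1 := span_inner_eq_one hyA
      refine ⟨fun v hv => ?_, h1⟩
      by_cases hvW : v ∈ W
      · exact le_of_eq (h1 v hvW)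
      · have : y ∈ {z : E d | ⟪z, v⟫ < 1} := by
          have := Set.mem_preimage.mp hyG
          rw [hG] at this
          exact Set.mem_iInter₂.mp this v (Finset.mem_sdiff.mpr ⟨hv, hvW⟩)
        exact le_of_lt this
    apply interior_maximal hsub (hGopen.preimage continuous_subtype_val)
    show x ∈ G
    rw [hG]
    exact Set.mem_iInter₂.mpr (fun v hv => by
      have := Finset.mem_sdiff.mp hv
      exact hx.2 v this.1 this.2)


lemma isClosed_Dset (V W : Finset (E d)) : IsClosed (Dset V W) := by
  have h : Dset V W
      = (⋂ v ∈ (V : Set (E d)), {x : E d | ⟪x, v⟫ ≤ 1})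
        ∩ ⋂ w ∈ (W : Set (E d)), {x : E d | ⟪x, w⟫ = 1} := by
    ext x
    simp only [Dset, Set.mem_setOf_eq, Set.mem_inter_iff, Set.mem_iInter, Finset.mem_coe]
  rw [h]
  exact (isClosed_biInter fun v _ => isClosed_le
      (Continuous.inner continuous_id continuous_const) continuous_const).inter
    (isClosed_biInter fun w _ => isClosed_eq
      (Continuous.inner continuous_id continuous_const) continuous_const)

lemma closure_cone (V W : Finset (E d)) (hWV : W ⊆ V) (hW : W.Nonempty)
    (hcomp : IsCompact (Dset V W)) {x₀ : E d} (hx₀ : x₀ ∈ Rset V W) :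
    closure {c : E d | ∃ l : ℝ, 0 < l ∧ ∃ x ∈ Rset V W, c = l • x}
      = {c : E d | ∃ l : ℝ, 0 ≤ l ∧ ∃ x ∈ Dset V W, c = l • x} := by
  obtain ⟨w₀, hw₀⟩ := hW
  apply Set.Subset.antisymm
  · apply closure_minimal
    · rintro c ⟨l, hl, x, hx, rfl⟩
      exact ⟨l, hl.le, x, Rset_subset_Dset hWV hx, rfl⟩
    · apply IsSeqClosed.isClosed
      intro u y hu hlim
      choose l hl x hx hux using hu
      obtain ⟨z, hz, φ, hφ, hzx⟩ := hcomp.tendsto_subseq hx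
      have h1 : ∀ n, l n = ⟪u n, w₀⟫ := fun n => by
        rw [hux n, real_inner_smul_left, (hx n).2 w₀ hw₀, mul_one]
      have hlconv : Filter.Tendsto (fun n => l (φ n)) Filter.atTop (𝓝 ⟪y, w₀⟫) := by
        have h2 : Filter.Tendsto (fun n => ⟪u (φ n), w₀⟫) Filter.atTop (𝓝 ⟪y, w₀⟫) :=
          (hlim.comp hφ.tendsto_atTop).inner tendsto_const_nhds
        simpa only [← h1] using h2
      have hLnonneg : 0 ≤ ⟪y, w₀⟫ :=
        ge_of_tendsto' hlconv (fun n => hl (φ n))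
      have hprod : Filter.Tendsto (fun n => l (φ n) • x (φ n)) Filter.atTop
          (𝓝 (⟪y, w₀⟫ • z)) := hlconv.smul hzx
      have huy : Filter.Tendsto (fun n => u (φ n)) Filter.atTop (𝓝 y) :=
        hlim.comp hφ.tendsto_atTop
      have hyz : y = ⟪y, w₀⟫ • z :=
        tendsto_nhds_unique (by simpa only [hux] using huy) hprod
      exact ⟨⟪y, w₀⟫, hLnonneg, z, hz, hyz⟩
  · rintro c ⟨l, hl, x, hx, rfl⟩
    set t : ℕ → ℝ := fun n => 1 / (n + 1) with ht
    have htpos : ∀ n : ℕ, 0 < t n := fun n => by positivity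
    have htle : ∀ n : ℕ, t n ≤ 1 := fun n => by
      rw [ht]
      rw [div_le_one (by positivity)]
      simp
    have ht0 : Filter.Tendsto t Filter.atTop (𝓝 0) :=
      tendsto_one_div_add_atTop_nhds_zero_nat
    apply mem_closure_of_tendsto
      (f := fun n : ℕ => (l + t n) • ((1 - t n) • x + t n • x₀)) (b := Filter.atTop)
    · have hc1 : Filter.Tendsto (fun n : ℕ => l + t n) Filter.atTop (𝓝 (l + 0)) :=
        tendsto_const_nhds.add ht0
      have hc2 : Filter.Tendsto (fun n : ℕ => (1 - t n) • x + t n • x₀) Filter.atTop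
          (𝓝 ((1 - 0 : ℝ) • x + (0:ℝ) • x₀)) :=
        ((tendsto_const_nhds.sub ht0).smul tendsto_const_nhds).add (ht0.smul tendsto_const_nhds)
      have hc3 := hc1.smul hc2
      simpa using hc3
    · apply Filter.Eventually.of_forall
      intro n
      refine ⟨l + t n, by have := htpos n; linarith, (1 - t n) • x + t n • x₀, ⟨?_, ?_⟩, rfl⟩
      · intro w hw
        rw [inner_add_left, real_inner_smul_left, real_inner_smul_left,
          hx.2 w hw, hx₀.1 w hw]
        ring
      · intro v hv hvW
        have hb1 : ⟪x, v⟫ ≤ 1 := hx.1 v hv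
        have hb2 : ⟪x₀, v⟫ < 1 := hx₀.2 v hv hvW
        rw [inner_add_left, real_inner_smul_left, real_inner_smul_left]
        nlinarith [htpos n, htle n]

end DFaux

lemma isLinearMap_inner_left {d : ℕ} (c : E d) : IsLinearMap ℝ (fun x : E d => ⟪c, x⟫) :=
  ⟨fun a b => inner_add_right c a b, fun t a => real_inner_smul_right c a t⟩

namespace DFaux
variable {d : ℕ}

lemma mem_maximizers_of_sup {V : Finset (E d)} (hV : V.Nonempty) {c w : E d}
    (hw : w ∈ V) (hwsup : ⟪w, c⟫ = V.sup' hV fun v => ⟪v, c⟫) :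
    w ∈ maximizers (convexHull ℝ (V : Set (E d))) c :=
  ⟨subset_convexHull ℝ _ (Finset.mem_coe.mpr hw),
    fun y hy => hwsup ▸ inner_le_sup' V hV c hy⟩

lemma maximizers_inner_eq_sup {V : Finset (E d)} (hV : V.Nonempty) {c x : E d}
    (hx : x ∈ maximizers (convexHull ℝ (V : Set (E d))) c) :
    ⟪x, c⟫ = V.sup' hV fun v => ⟪v, c⟫ := by
  obtain ⟨u, huV, hum⟩ := Finset.exists_mem_eq_sup' hV (fun v => ⟪v, c⟫)
  have h1 : ⟪x, c⟫ ≤ V.sup' hV fun v => ⟪v, c⟫ := inner_le_sup' V hV c hx.1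
  have h2 : ⟪u, c⟫ ≤ ⟪x, c⟫ := hx.2 u (subset_convexHull ℝ _ (Finset.mem_coe.mpr huV))
  rw [hum]
  linarith [hum ▸ h2]

lemma maximizers_zero (V : Finset (E d)) :
    maximizers (convexHull ℝ (V : Set (E d))) 0 = convexHull ℝ (V : Set (E d)) := by
  ext x
  simp [maximizers]

end DFaux

open DFaux

theorem dualFace_isFace_and_normalCone_eq {d : ℕ} (P F : Set (E d))
    (hP : IsPolytope P) (hfull : affineSpan ℝ P = ⊤)
    (hc : 0 ∈ interior P) (hF : IsFace P F) :
    IsFace (polarDual P) (dualFace P F) ∧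
    (IsNontrivialFace P F →
      normalCone P F
        = {c | ∃ l : ℝ, 0 < l ∧ ∃ x ∈ intrinsicInterior ℝ (dualFace P F), c = l • x} ∧
      closure (normalCone P F)
        = {c | ∃ l : ℝ, 0 ≤ l ∧ ∃ x ∈ dualFace P F, c = l • x}) := by
  classical
  obtain ⟨V, hV, rfl⟩ :=
    (hP : ∃ V : Finset (E d), V.Nonempty ∧ P = convexHull ℝ (V : Set (E d)))
  constructor
  · -- dualFace is a face of the polar dual
    rcases hF with hFe | hFP | ⟨c, hc0, hFc⟩
    · -- F = ∅
      have h : dualFace (convexHull ℝ (V : Set (E d))) F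
          = polarDual (convexHull ℝ (V : Set (E d))) := by
        rw [hFe]; ext x; simp [dualFace]
      rw [h]; exact Or.inr (Or.inl rfl)
    · -- F = P
      have h0P : (0 : E d) ∈ convexHull ℝ (V : Set (E d)) := interior_subset hc
      have h : dualFace (convexHull ℝ (V : Set (E d))) F = ∅ := by
        rw [hFP]
        ext x
        simp only [dualFace, Set.mem_setOf_eq, Set.mem_empty_iff_false, iff_false, not_and]
        intro _ h
        have h0 := h 0 h0P
        simp at h0
      rw [h]; exact Or.inl rfl
    · -- F = maximizers P c
      subst hFc
      right; right
      set m := V.sup' hV fun v => ⟪v, c⟫ with hm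
      set W := V.filter (fun v => ⟪v, c⟫ = m) with hWdef
      have hmpos : 0 < m := sup'_pos V hV hc hc0
      have hFW : maximizers (convexHull ℝ (V : Set (E d))) c
          = convexHull ℝ (W : Set (E d)) := maximizers_convexHull V hV c
      have hWne : W.Nonempty := by
        obtain ⟨v, hvV, hvm⟩ := Finset.exists_mem_eq_sup' hV (fun v => ⟪v, c⟫)
        exact ⟨v, Finset.mem_filter.mpr ⟨hvV, hvm.symm⟩⟩
      have hcard : (0 : ℝ) < (W.card : ℝ) := by exact_mod_cast Finset.card_pos.mpr hWne
      set g : E d := (W.card : ℝ)⁻¹ • ∑ w ∈ W, w with hg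
      have hinner_g : ∀ x : E d, ⟪x, g⟫ = (W.card : ℝ)⁻¹ * ∑ w ∈ W, ⟪x, w⟫ := by
        intro x
        rw [hg, real_inner_smul_right, inner_sum]
      have hgW : g ∈ convexHull ℝ (W : Set (E d)) := by
        have hmem := W.centerMass_mem_convexHull (w := fun _ => (1 : ℝ)) (z := id)
          (fun _ _ => zero_le_one)
          (by rw [Finset.sum_const, nsmul_eq_mul, mul_one]; exact hcard)
          (fun x hx => Finset.mem_coe.mpr hx)
        have heq : W.centerMass (fun _ => (1 : ℝ)) id = g := by
          rw [Finset.centerMass, Finset.sum_const, nsmul_eq_mul, mul_one, hg]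
          simp
        rwa [heq] at hmem
      have hgF : g ∈ maximizers (convexHull ℝ (V : Set (E d))) c := by
        rw [hFW]; exact hgW
      have hWsup : ∀ w ∈ W, ⟪w, c⟫ = m := fun w hw => (Finset.mem_filter.mp hw).2
      have hx₀P : m⁻¹ • c ∈ polarDual (convexHull ℝ (V : Set (E d))) := by
        rw [polarDual_convexHull]
        intro v hv
        have h1 : ⟪c, v⟫ ≤ m := by
          rw [real_inner_comm]; exact Finset.le_sup' (fun v => ⟪v, c⟫) hv
        rw [real_inner_smul_left]
        calc m⁻¹ * ⟪c, v⟫ ≤ m⁻¹ * m := by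
              exact mul_le_mul_of_nonneg_left h1 (inv_nonneg.mpr hmpos.le)
        _ = 1 := inv_mul_cancel₀ hmpos.ne'
      have hx₀w : ∀ w ∈ W, ⟪m⁻¹ • c, w⟫ = 1 := by
        intro w hw
        rw [real_inner_smul_left, real_inner_comm, hWsup w hw, inv_mul_cancel₀ hmpos.ne']
      have hx₀g : ⟪m⁻¹ • c, g⟫ = 1 := by
        rw [hinner_g]
        rw [Finset.sum_congr rfl (fun w hw => hx₀w w hw), Finset.sum_const, nsmul_eq_mul,
          mul_one, inv_mul_cancel₀ hcard.ne']
      have hg0 : g ≠ 0 := by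
        intro h
        rw [h, inner_zero_right] at hx₀g
        norm_num at hx₀g
      refine ⟨g, hg0, ?_⟩
      ext x
      constructor
      · rintro ⟨hxPd, hxF⟩
        refine ⟨hxPd, fun y hyPd => ?_⟩
        have h1 : ⟪x, g⟫ = 1 := hxF g hgF
        have h2 : ⟪y, g⟫ ≤ 1 := hyPd g hgF.1
        rw [h1]
        exact h2
      · rintro ⟨hxPd, hxmax⟩
        refine ⟨hxPd, ?_⟩
        have hxg : ⟪x, g⟫ = 1 := by
          have hle : ⟪x, g⟫ ≤ 1 := hxPd g hgF.1
          have hge : ⟪m⁻¹ • c, g⟫ ≤ ⟪x, g⟫ := hxmax _ hx₀P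
          rw [hx₀g] at hge
          linarith
        have hall : ∀ w ∈ W, ⟪x, w⟫ = 1 := by
          apply all_eq_one
          · intro w hw
            exact hxPd w (subset_convexHull ℝ _
              (Finset.mem_coe.mpr (Finset.filter_subset _ _ hw)))
          · have h := hinner_g x
            rw [hxg] at h
            have h2 := congrArg (fun r : ℝ => (W.card : ℝ) * r) h
            rw [← mul_assoc, mul_inv_cancel₀ hcard.ne', one_mul, mul_one] at h2
            exact h2.symm
        intro f hf
        have hsub : convexHull ℝ (W : Set (E d)) ⊆ {z : E d | ⟪x, z⟫ = 1} :=
          convexHull_min (fun w hw => hall w (Finset.mem_coe.mp hw))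
            (convex_hyperplane (isLinearMap_inner_left x) 1)
        exact hsub (hFW ▸ hf)
  · -- the normal cone statements
    rintro ⟨hFface, hFne, hFnP⟩
    obtain ⟨c₀, hc₀0, hFc⟩ : ∃ c₀ : E d, c₀ ≠ 0
        ∧ F = maximizers (convexHull ℝ (V : Set (E d))) c₀ := by
      rcases hFface with h | h | h
      · exact absurd h hFne
      · exact absurd h hFnP
      · exact h
    subst hFc
    set m₀ := V.sup' hV fun v => ⟪v, c₀⟫ with hm₀
    set W := V.filter (fun v => ⟪v, c₀⟫ = m₀) with hWdef
    have hWV : W ⊆ V := Finset.filter_subset _ _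
    have hm₀pos : 0 < m₀ := sup'_pos V hV hc hc₀0
    have hFW : maximizers (convexHull ℝ (V : Set (E d))) c₀
        = convexHull ℝ (W : Set (E d)) := maximizers_convexHull V hV c₀
    have hWne : W.Nonempty := by
      obtain ⟨v, hvV, hvm⟩ := Finset.exists_mem_eq_sup' hV (fun v => ⟪v, c₀⟫)
      exact ⟨v, Finset.mem_filter.mpr ⟨hvV, hvm.symm⟩⟩
    -- the distinguished relative interior point
    set x₀ : E d := m₀⁻¹ • c₀ with hx₀def
    have hx₀R : x₀ ∈ Rset V W := by
      constructor
      · intro w hw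
        rw [hx₀def, real_inner_smul_left, real_inner_comm,
          (Finset.mem_filter.mp hw).2, inv_mul_cancel₀ hm₀pos.ne']
      · intro v hv hvW
        have h1 : ⟪v, c₀⟫ ≤ m₀ := Finset.le_sup' (fun v => ⟪v, c₀⟫) hv
        have h2 : ⟪v, c₀⟫ ≠ m₀ := fun h => hvW (Finset.mem_filter.mpr ⟨hv, h⟩)
        have h3 : ⟪v, c₀⟫ < m₀ := lt_of_le_of_ne h1 h2
        rw [hx₀def, real_inner_smul_left, real_inner_comm]
        calc m₀⁻¹ * ⟪v, c₀⟫ < m₀⁻¹ * m₀ := by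
              exact mul_lt_mul_of_pos_left h3 (inv_pos.mpr hm₀pos)
        _ = 1 := inv_mul_cancel₀ hm₀pos.ne'
    -- dual face description
    have hWF : ∀ w ∈ W, w ∈ maximizers (convexHull ℝ (V : Set (E d))) c₀ := by
      intro w hw
      exact mem_maximizers_of_sup hV (hWV hw) (Finset.mem_filter.mp hw).2
    have hDeq : dualFace (convexHull ℝ (V : Set (E d)))
        (maximizers (convexHull ℝ (V : Set (E d))) c₀) = Dset V W := by
      ext x
      constructor
      · rintro ⟨hxPd, hxF⟩
        refine ⟨?_, fun w hw => hxF w (hWF w hw)⟩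
        rw [polarDual_convexHull] at hxPd
        exact hxPd
      · rintro ⟨hx1, hx2⟩
        refine ⟨?_, ?_⟩
        · rw [polarDual_convexHull]
          exact hx1
        · intro f hf
          have hsub : convexHull ℝ (W : Set (E d)) ⊆ {z : E d | ⟪x, z⟫ = 1} :=
            convexHull_min (fun w hw => hx2 w (Finset.mem_coe.mp hw))
              (convex_hyperplane (isLinearMap_inner_left x) 1)
          exact hsub (hFW ▸ hf)
    have hIntEq : intrinsicInterior ℝ (dualFace (convexHull ℝ (V : Set (E d)))
        (maximizers (convexHull ℝ (V : Set (E d))) c₀)) = Rset V W := by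
      rw [hDeq]
      exact intrinsicInterior_Dset_eq_Rset hWV hx₀R
    -- normal cone description
    have hNeq : normalCone (convexHull ℝ (V : Set (E d)))
        (maximizers (convexHull ℝ (V : Set (E d))) c₀)
        = {c : E d | ∃ l : ℝ, 0 < l ∧ ∃ x ∈ Rset V W, c = l • x} := by
      ext c
      constructor
      · intro hcN
        have hcN' : maximizers (convexHull ℝ (V : Set (E d))) c
            = maximizers (convexHull ℝ (V : Set (E d))) c₀ := hcN
        have hcne : c ≠ 0 := by
          intro h
          rw [h, maximizers_zero] at hcN'
          exact hFnP hcN'.symm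
        set m := V.sup' hV fun v => ⟪v, c⟫ with hm
        have hmpos : 0 < m := sup'_pos V hV hc hcne
        refine ⟨m, hmpos, m⁻¹ • c, ⟨?_, ?_⟩, (smul_inv_smul₀ hmpos.ne' c).symm⟩
        · intro w hw
          have hwmax : w ∈ maximizers (convexHull ℝ (V : Set (E d))) c := by
            rw [hcN']
            exact hWF w hw
          have := maximizers_inner_eq_sup hV hwmax
          rw [real_inner_smul_left, real_inner_comm, this, inv_mul_cancel₀ hmpos.ne']
        · intro v hv hvW
          have h1 : ⟪v, c⟫ ≤ m := Finset.le_sup' (fun v => ⟪v, c⟫) hv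
          have h2 : ⟪v, c⟫ ≠ m := by
            intro h
            have hvmax : v ∈ maximizers (convexHull ℝ (V : Set (E d))) c :=
              mem_maximizers_of_sup hV hv h
            rw [hcN'] at hvmax
            have h3 := maximizers_inner_eq_sup hV hvmax
            exact hvW (Finset.mem_filter.mpr ⟨hv, h3⟩)
          have h3 : ⟪v, c⟫ < m := lt_of_le_of_ne h1 h2
          rw [real_inner_smul_left, real_inner_comm]
          calc m⁻¹ * ⟪v, c⟫ < m⁻¹ * m := by
                exact mul_lt_mul_of_pos_left h3 (inv_pos.mpr hmpos)
          _ = 1 := inv_mul_cancel₀ hmpos.ne'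
      · rintro ⟨l, hl, x, hxR, rfl⟩
        show maximizers (convexHull ℝ (V : Set (E d))) (l • x)
          = maximizers (convexHull ℝ (V : Set (E d))) c₀
        have hvals : ∀ v : E d, ⟪v, l • x⟫ = l * ⟪x, v⟫ := by
          intro v
          rw [real_inner_smul_right, real_inner_comm]
        have hsup : (V.sup' hV fun v => ⟪v, l • x⟫) = l := by
          apply le_antisymm
          · apply Finset.sup'_le
            intro v hv
            rw [hvals]
            by_cases hvW : v ∈ W
            · rw [hxR.1 v hvW, mul_one]
            · have := hxR.2 v hv hvW
              nlinarith
          · obtain ⟨w, hw⟩ := hWne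
            have h1 : ⟪w, l • x⟫ = l := by rw [hvals, hxR.1 w hw, mul_one]
            exact h1.symm.trans_le (Finset.le_sup' (fun v => ⟪v, l • x⟫) (hWV hw))
        have hfilter : V.filter (fun v => ⟪v, l • x⟫ = V.sup' hV fun v => ⟪v, l • x⟫)
            = W := by
          ext v
          simp only [Finset.mem_filter, hsup]
          constructor
          · rintro ⟨hv, hveq⟩
            by_contra hvW
            have := hxR.2 v hv hvW
            rw [hvals] at hveq
            nlinarith
          · intro hv
            exact ⟨hWV hv, by rw [hvals, hxR.1 v hv, mul_one]⟩
        rw [maximizers_convexHull V hV (l • x), hfilter, hFW]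
    -- compactness of the dual face
    have hcomp : IsCompact (Dset V W) := by
      obtain ⟨ε, hε, hball⟩ := Metric.mem_nhds_iff.mp (mem_interior_iff_mem_nhds.mp hc)
      apply Metric.isCompact_of_isClosed_isBounded (isClosed_Dset V W)
      apply (Metric.isBounded_closedBall (x := (0 : E d)) (r := 2 / ε)).subset
      intro x hx
      rw [Metric.mem_closedBall, dist_zero_right]
      by_cases hx0 : x = 0
      · rw [hx0, norm_zero]
        positivity
      · have hxn : (0 : ℝ) < ‖x‖ := norm_pos_iff.mpr hx0
        set y : E d := (ε / 2 * ‖x‖⁻¹) • x with hy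
        have hymem : y ∈ convexHull ℝ (V : Set (E d)) := by
          apply hball
          rw [Metric.mem_ball, dist_zero_right, hy, norm_smul, Real.norm_eq_abs,
            abs_of_pos (by positivity)]
          calc ε / 2 * ‖x‖⁻¹ * ‖x‖ = ε / 2 := by field_simp
          _ < ε := by linarith
        have hxy : ⟪x, y⟫ ≤ 1 := by
          have hxPd : x ∈ polarDual (convexHull ℝ (V : Set (E d))) := by
            rw [polarDual_convexHull]
            exact hx.1
          exact hxPd y hymem
        rw [hy, real_inner_smul_right, real_inner_self_eq_norm_sq] at hxy
        have : ε / 2 * ‖x‖ ≤ 1 := by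
          calc ε / 2 * ‖x‖ = ε / 2 * ‖x‖⁻¹ * ‖x‖ ^ 2 := by field_simp
          _ ≤ 1 := hxy
        rw [le_div_iff₀ hε]
        nlinarith
    have hclosure := closure_cone V W hWV hWne hcomp hx₀R
    constructor
    · rw [hIntEq, hNeq]
    · rw [hNeq, hclosure, hDeq]
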